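/- Let a_j = i^{j−1} for j = 1, 2, 3, 4 (so (a₁,a₂,a₃,a₄) = (1, i, −1, −i)), with indices taken cyclically modulo 4 (a₅ = a₁, a₀ = a₄). Then the real part of (2/π) · ∑_{j=1}^4 ∑_{k=1}^4 (−1)^{j+k} · a_j² · conj(a_k)² · (a_{j+1} − a_{j−1}) · (conj(a_{k+1}) − conj(a_{k−1})) / ((a_{j+1} − a_j)·(a_j − a_{j−1})·(conj(a_{k+1}) − conj(a_k))·(conj(a_k) − conj(a_{k−1}))) · σ(a_j, a_k) equals (8/π)·log 2, where σ(a,b) = ∑_{p=0}^∞ (a·conj(b))^{p+1}/((p+1)(p+2)(p+3)). -/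

import Mathlib

/-
The summand factors as `w j * conj (w k) * σ(a_j, a_k)` with `w j = -(-1)^j i a_j`. Expanding
`σ` as a power series turns this Hermitian form into
`∑_p |∑_j w_j a_j^(p+1)|² / ((p+1)(p+2)(p+3))`, and `∑_j w_j a_j^(p+1) = i ∑_{d<4} (i^p)^d`
vanishes unless `4 ∣ p`, where it has modulus `4`. What is left is
`16 ∑_m 1/((4m+1)(4m+2)(4m+3))`, whose partial sums are `((H_{4M} - H_M) - 3/2 (H_{2M} - H_M))/2`
in harmonic numbers; since `H_{cn} - H_n → log c`, the series sums to `(log 2)/4`.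
-/

open scoped ComplexConjugate

/-- The kernel `σ(a,b) = ∑_{p=0}^∞ (a·conj b)^{p+1}/((p+1)(p+2)(p+3))` for `a, b` on the
unit circle. -/
noncomputable def sigmaWP (a b : ℂ) : ℂ :=
  ∑' p : ℕ, (a * conj b) ^ (p + 1) / (((p : ℂ) + 1) * ((p : ℂ) + 2) * ((p : ℂ) + 3))

/-- The vertices `a_j = i^{j−1}` of the standard quad `(1, i, −1, −i)`, indexed cyclically by
`j : ℤ` (the formula is automatically `4`-periodic since `i⁴ = 1`). -/
noncomputable def quadVertex (j : ℤ) : ℂ := Complex.I ^ (j - 1)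

open Filter Topology Finset Complex

theorem IsPrimitiveRoot.sum_range_pow_pow {K : Type*} [Field K] {ζ : K} {n : ℕ}
    (hζ : IsPrimitiveRoot ζ n) (p : ℕ) :
    ∑ d ∈ range n, (ζ ^ p) ^ d = if n ∣ p then (n : K) else 0 := by
  split_ifs with hnp
  · simp [(hζ.pow_eq_one_iff_dvd p).2 hnp]
  · have hpow : (ζ ^ p) ^ n = 1 := by rw [← pow_mul, mul_comm, pow_mul, hζ.pow_eq_one, one_pow]
    rw [geom_sum_eq (mt (hζ.pow_eq_one_iff_dvd p).1 hnp), hpow, sub_self, zero_div]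

theorem tendsto_harmonic_mul_sub_harmonic {c : ℕ} (hc : 0 < c) :
    Tendsto (fun n : ℕ => (harmonic (c * n) : ℝ) - harmonic n) atTop (𝓝 (Real.log c)) := by
  have hcn : Tendsto (fun n : ℕ => c * n) atTop atTop := tendsto_id.const_mul_atTop' hc
  have h := ((Real.tendsto_harmonic_sub_log.comp hcn).sub
    Real.tendsto_harmonic_sub_log).add_const (Real.log c)
  rw [sub_self, zero_add] at h
  refine h.congr' ?_
  filter_upwards [eventually_ge_atTop 1] with n hn
  have hlog : Real.log (c * n) = Real.log c + Real.log n :=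
    Real.log_mul (by positivity) (by positivity)
  simp only [Function.comp_apply, Nat.cast_mul, hlog]
  ring

theorem sum_range_one_div_four_mul_add (M : ℕ) :
    ∑ m ∈ range M, 1 / ((4 * m + 1) * (4 * m + 2) * (4 * m + 3) : ℝ)
      = ((harmonic (4 * M) - harmonic M : ℝ) - 3 / 2 * (harmonic (2 * M) - harmonic M)) / 2 := by
  induction M with
  | zero => simp
  | succ n ih =>
    rw [sum_range_succ, ih, show 4 * (n + 1) = 4 * n + 1 + 1 + 1 + 1 by ring,
      show 2 * (n + 1) = 2 * n + 1 + 1 by ring]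
    simp only [harmonic_succ]
    push_cast
    field_simp
    ring

theorem hasSum_one_div_four_mul_add :
    HasSum (fun m : ℕ => 1 / ((4 * m + 1) * (4 * m + 2) * (4 * m + 3) : ℝ)) (Real.log 2 / 4) := by
  rw [hasSum_iff_tendsto_nat_of_nonneg (fun m => by positivity)]
  simp only [sum_range_one_div_four_mul_add]
  have h := ((tendsto_harmonic_mul_sub_harmonic (c := 4) (by norm_num)).sub
    ((tendsto_harmonic_mul_sub_harmonic (c := 2) (by norm_num)).const_mul (3 / 2))).div_const 2
  convert h using 2
  rw [show ((4 : ℕ) : ℝ) = 2 ^ 2 by norm_num, Real.log_pow]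
  push_cast
  ring

theorem hasSum_ite_dvd_four_div :
    HasSum (fun p : ℕ => (if 4 ∣ p then 16 else 0) / ((p + 1) * (p + 2) * (p + 3) : ℝ))
      (4 * Real.log 2) := by
  have hinj : Function.Injective (fun m : ℕ => 4 * m) := mul_right_injective₀ (by norm_num)
  refine (hinj.hasSum_iff fun p hp => ?_).1 ?_
  · rw [if_neg fun ⟨m, hm⟩ => hp ⟨m, hm.symm⟩, zero_div]
  · rw [show 4 * Real.log 2 = 16 * (Real.log 2 / 4) by ring]
    refine (hasSum_one_div_four_mul_add.mul_left 16).congr_fun fun m => ?_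
    simp only [Function.comp_apply, dvd_mul_right, if_true, Nat.cast_mul, Nat.cast_ofNat]
    ring

theorem summable_pow_succ_div {z : ℂ} (hz : ‖z‖ ≤ 1) :
    Summable fun p : ℕ => z ^ (p + 1) / (((p : ℂ) + 1) * ((p : ℂ) + 2) * ((p : ℂ) + 3)) := by
  have hcube : Summable fun p : ℕ => 1 / ((p : ℝ) + 1) ^ 3 := by
    simpa using (summable_nat_add_iff 1).2 (Real.summable_one_div_nat_pow.2 (by norm_num : 1 < 3))
  refine Summable.of_norm_bounded hcube fun p => ?_
  have hD : ((p : ℂ) + 1) * ((p : ℂ) + 2) * ((p : ℂ) + 3)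
      = (((p + 1) * (p + 2) * (p + 3) : ℝ) : ℂ) := by push_cast; ring
  rw [norm_div, norm_pow, hD, norm_real, Real.norm_of_nonneg (by positivity)]
  gcongr
  · exact pow_le_one₀ (norm_nonneg z) hz
  · nlinarith [sq_nonneg ((p : ℝ) + 1), (p.cast_nonneg : (0 : ℝ) ≤ p)]

theorem sum_sum_mul_conj_mul_sigmaWP {ι : Type*} (s : Finset ι) (u a : ι → ℂ)
    (ha : ∀ i ∈ s, ‖a i‖ ≤ 1) :
    ∑ j ∈ s, ∑ k ∈ s, u j * conj (u k) * sigmaWP (a j) (a k)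
      = ((∑' p : ℕ, normSq (∑ j ∈ s, u j * a j ^ (p + 1)) / ((p + 1) * (p + 2) * (p + 3)) : ℝ)
          : ℂ) := by
  have hsum : ∀ j ∈ s, ∀ k ∈ s, Summable fun p : ℕ => u j * conj (u k) *
      ((a j * conj (a k)) ^ (p + 1) / (((p : ℂ) + 1) * ((p : ℂ) + 2) * ((p : ℂ) + 3))) :=
    fun j hj k hk => (summable_pow_succ_div (by
      rw [norm_mul, norm_conj]
      exact mul_le_one₀ (ha j hj) (norm_nonneg _) (ha k hk))).mul_left _
  simp only [sigmaWP, ← tsum_mul_left]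
  rw [ofReal_tsum, sum_congr rfl fun j hj => (Summable.tsum_finsetSum (hsum j hj)).symm,
    ← Summable.tsum_finsetSum fun j hj => summable_sum fun k hk => hsum j hj k hk]
  congr 1 with p
  push_cast
  rw [← mul_conj, map_sum, sum_mul_sum, sum_div]
  refine sum_congr rfl fun j _ => ?_
  rw [sum_div]
  refine sum_congr rfl fun k _ => ?_
  simp only [map_mul, map_pow]
  ring

theorem quadVertex_ne_zero (j : ℤ) : quadVertex j ≠ 0 := zpow_ne_zero _ I_ne_zero

theorem norm_quadVertex (j : ℤ) : ‖quadVertex j‖ = 1 := by simp [quadVertex]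

theorem quadVertex_add_one (j : ℤ) : quadVertex (j + 1) = I * quadVertex j := by
  rw [quadVertex, quadVertex, add_sub_right_comm, zpow_add_one₀ I_ne_zero, mul_comm]

theorem quadVertex_sub_one (j : ℤ) : quadVertex (j - 1) = -I * quadVertex j := by
  rw [← sub_add_cancel j 1, quadVertex_add_one, add_sub_cancel_right, ← mul_assoc]
  simp

theorem quadVertex_natCast_add_one (d : ℕ) : quadVertex (d + 1) = I ^ d := by
  simp [quadVertex]

noncomputable def diamondShearCoeff (j : ℤ) : ℂ :=
  (-1) ^ j * quadVertex j ^ 2 * (quadVertex (j + 1) - quadVertex (j - 1)) /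
    ((quadVertex (j + 1) - quadVertex j) * (quadVertex j - quadVertex (j - 1)))

theorem diamondShearCoeff_eq (j : ℤ) : diamondShearCoeff j = -(-1) ^ j * I * quadVertex j := by
  set a := quadVertex j
  have hden : (I * a - a) * (a - -I * a) = -2 * a ^ 2 := by linear_combination a ^ 2 * I_sq
  rw [diamondShearCoeff, quadVertex_add_one, quadVertex_sub_one, hden,
    div_eq_iff (by simp [a, quadVertex_ne_zero])]
  ring

theorem diamondShearCoeff_mul_pow (d p : ℕ) :
    diamondShearCoeff (d + 1) * quadVertex (d + 1) ^ (p + 1) = I * (I ^ p) ^ d := by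
  rw [diamondShearCoeff_eq, quadVertex_natCast_add_one, zpow_add_one₀ (by norm_num), zpow_natCast]
  calc -((-1) ^ d * -1) * I * I ^ d * (I ^ d) ^ (p + 1)
      = (I ^ 2) ^ d * I * I ^ d * (I ^ d) ^ (p + 1) := by rw [I_sq]; ring
    _ = I * (I ^ p) ^ d * (I ^ 4) ^ d := by ring
    _ = I * (I ^ p) ^ d := by rw [I_pow_four, one_pow, mul_one]

theorem sum_diamondShearCoeff_mul_pow (p : ℕ) :
    ∑ j ∈ Icc (1 : ℤ) 4, diamondShearCoeff j * quadVertex j ^ (p + 1)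
      = I * if 4 ∣ p then 4 else 0 := by
  have hIcc : Icc (1 : ℤ) 4 =
      (range 4).map ⟨fun d : ℕ => (d : ℤ) + 1, (add_left_injective 1).comp Nat.cast_injective⟩ := by
    decide
  rw [hIcc, sum_map]
  simp only [Function.Embedding.coeFn_mk, diamondShearCoeff_mul_pow, ← mul_sum,
    isPrimitiveRoot_I.sum_range_pow_pow]
  norm_num

theorem normSq_sum_diamondShearCoeff_mul_pow (p : ℕ) :
    normSq (∑ j ∈ Icc (1 : ℤ) 4, diamondShearCoeff j * quadVertex j ^ (p + 1))
      = if 4 ∣ p then 16 else 0 := by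
  rw [sum_diamondShearCoeff_mul_pow, normSq_mul, normSq_I, one_mul]
  split_ifs <;> norm_num

theorem wp_summand_eq (j k : ℤ) :
    (-1 : ℂ) ^ (j + k) * (quadVertex j) ^ 2 * (conj (quadVertex k)) ^ 2 *
        (quadVertex (j + 1) - quadVertex (j - 1)) *
        (conj (quadVertex (k + 1)) - conj (quadVertex (k - 1))) /
        ((quadVertex (j + 1) - quadVertex j) * (quadVertex j - quadVertex (j - 1)) *
          (conj (quadVertex (k + 1)) - conj (quadVertex k)) *
          (conj (quadVertex k) - conj (quadVertex (k - 1)))) *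
        sigmaWP (quadVertex j) (quadVertex k)
      = diamondShearCoeff j * conj (diamondShearCoeff k) *
          sigmaWP (quadVertex j) (quadVertex k) := by
  simp only [diamondShearCoeff, map_div₀, map_mul, map_sub, map_zpow₀, map_pow, map_neg, map_one]
  rw [zpow_add₀ (by norm_num), div_mul_div_comm]
  congr 2 <;> ring

/-- **Weil–Petersson norm of a single diamond shear.**
The real part of the double sum expressing `‖u‖²_WP` for the unit infinitesimal diamond shear
on the quad `(1, i, −1, −i)` with diagonal `(1, −1)` equals `(8/π) log 2`. -/
theorem wp_norm_single_diamond :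
    ((((2 / Real.pi : ℝ) : ℂ)) *
        ∑ j ∈ Finset.Icc (1 : ℤ) 4, ∑ k ∈ Finset.Icc (1 : ℤ) 4,
          (-1 : ℂ) ^ (j + k) * (quadVertex j) ^ 2 * (conj (quadVertex k)) ^ 2 *
              (quadVertex (j + 1) - quadVertex (j - 1)) *
              (conj (quadVertex (k + 1)) - conj (quadVertex (k - 1))) /
              ((quadVertex (j + 1) - quadVertex j) * (quadVertex j - quadVertex (j - 1)) *
                (conj (quadVertex (k + 1)) - conj (quadVertex k)) *
                (conj (quadVertex k) - conj (quadVertex (k - 1)))) *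
              sigmaWP (quadVertex j) (quadVertex k)).re
      = 8 / Real.pi * Real.log 2 := by
  rw [Finset.sum_congr rfl fun j _ => Finset.sum_congr rfl fun k _ => wp_summand_eq j k,
    sum_sum_mul_conj_mul_sigmaWP _ _ _ fun j _ => (norm_quadVertex j).le, ← ofReal_mul, ofReal_re]
  simp only [normSq_sum_diamondShearCoeff_mul_pow]
  rw [hasSum_ite_dvd_four_div.tsum_eq]
  ring
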